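/- In the total effort exponential model f_i(x) = exp(-Σ_j x_j) with costs 0 < c_1 < ... < c_N and c_1 < 1, the socially optimal profile has x*_1 = -ln(c_1/N) = ln(N/c_1) > 0 and x*_j = 0 for j > 1, and this profile minimizes the social cost N·exp(-Σ_j x_j) + Σ_j c_j x_j over x ⪰ 0. -/

import Mathlib

open Finset Real

/- The profile concentrates all effort on the cheapest user. Any profile `x ⪰ 0` with total
effort `s` costs at least `N e^{-s} + c₁ s`, since every unit of effort costs at least `c₁`;
and the convex function `s ↦ N e^{-s} + c₁ s` is minimized at `s = ln (N / c₁)`, which is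
exactly the total effort of `x*`. -/

lemma mul_exp_neg_log_div_add_le {k c : ℝ} (hk : 0 < k) (hc : 0 < c) (s : ℝ) :
    k * exp (-log (k / c)) + c * log (k / c) ≤ k * exp (-s) + c * s := by
  have hkc : 0 < k / c := div_pos hk hc
  have h_exp_log : k * exp (-log (k / c)) = c := by
    rw [exp_neg, exp_log hkc]
    field_simp
  have h_tangent : 1 + (log (k / c) - s) ≤ k / c * exp (-s) := by
    have h := add_one_le_exp (log (k / c) - s)
    rwa [sub_eq_add_neg, exp_add, exp_log hkc, add_comm] at h
  have h_scaled : c * (k / c * exp (-s)) = k * exp (-s) := by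
    field_simp
  nlinarith [mul_le_mul_of_nonneg_left h_tangent hc.le]

lemma mul_sum_le_sum_mul_of_le {ι : Type*} (s : Finset ι) {c x : ι → ℝ} {m : ℝ}
    (hc : ∀ j ∈ s, m ≤ c j) (hx : ∀ j ∈ s, 0 ≤ x j) :
    m * ∑ j ∈ s, x j ≤ ∑ j ∈ s, c j * x j := by
  rw [mul_sum]
  exact sum_le_sum fun j hj => mul_le_mul_of_nonneg_right (hc j hj) (hx j hj)

/-- In the exponential total effort model, the profile with `x*_1 = ln(N/c_1)`
and all other coordinates zero is positive in coordinate 1 and minimizes the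
social cost `N·exp(-Σ_j x_j) + Σ_j c_j x_j` over the nonnegative orthant. -/
theorem stmt14 (N : ℕ) (hN : 2 ≤ N)
    (c : Fin N → ℝ) (hc0 : 0 < c ⟨0, by omega⟩) (hmono : StrictMono c)
    (hc1 : c ⟨0, by omega⟩ < 1)
    (xstar : Fin N → ℝ)
    (hxstar : xstar = fun j =>
      if j = (⟨0, by omega⟩ : Fin N) then Real.log (N / c ⟨0, by omega⟩) else 0) :
    0 < xstar ⟨0, by omega⟩ ∧
      ∀ x : Fin N → ℝ, (∀ j, 0 ≤ x j) →
        N * Real.exp (-∑ j, xstar j) + ∑ j, c j * xstar j ≤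
          N * Real.exp (-∑ j, x j) + ∑ j, c j * x j := by
  set i₀ : Fin N := ⟨0, by omega⟩
  have hN_pos : (0 : ℝ) < N := by positivity
  have hN_gt : c i₀ < N := hc1.trans (by exact_mod_cast hN)
  subst hxstar
  refine ⟨by simpa using log_pos ((one_lt_div hc0).2 hN_gt), fun x hx => ?_⟩
  have h_total : ∑ j, (if j = i₀ then log (N / c i₀) else 0) = log (N / c i₀) := by
    simp
  have h_cost : ∑ j, c j * (if j = i₀ then log (N / c i₀) else 0) = c i₀ * log (N / c i₀) := by
    simp
  have h_cheapest : c i₀ * ∑ j, x j ≤ ∑ j, c j * x j :=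
    mul_sum_le_sum_mul_of_le _ (fun j _ => hmono.monotone (Fin.mk_le_of_le_val (Nat.zero_le _))) (fun j _ => hx j)
  rw [h_total, h_cost]
  linarith [mul_exp_neg_log_div_add_le hN_pos hc0 (∑ j, x j)]
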